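/- arXiv:2207.03275 — 2 statements merged into one kernel-verified Lean document; each statement's English description precedes it below -/
import Mathlib

section
/- (Serializability of parallel doubling) For shapes S_I and S_F: S_F can be obtained (up to translation) from S_I through a finite sequence of east and north RC doubling operations if and only if S_F can be obtained (up to translation) from S_I through a finite sequence of single column and single row doubling operations (i.e., east and north RC doublings with |D| = 1). -/
/-- Minimum first coordinate of a shape (0 for the empty set). -/
def xmin (S : Finset (ℤ × ℤ)) : ℤ := ((S.image Prod.fst).min).untopD 0

/-- Minimum second coordinate of a shape (0 for the empty set). -/
def ymin (S : Finset (ℤ × ℤ)) : ℤ := ((S.image Prod.snd).min).untopD 0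

/-- East full doubling. -/
def DE (S : Finset (ℤ × ℤ)) : Finset (ℤ × ℤ) :=
  S.image (fun p => (2 * p.1 - xmin S, p.2)) ∪
    S.image (fun p => (2 * p.1 - xmin S + 1, p.2))

/-- North full doubling. -/
def DN (S : Finset (ℤ × ℤ)) : Finset (ℤ × ℤ) :=
  S.image (fun p => (p.1, 2 * p.2 - ymin S)) ∪
    S.image (fun p => (p.1, 2 * p.2 - ymin S + 1))

/-- Apply a sequence of full doubling operations (`true` = east, `false` = north),
in order (head of the list first). -/
def applySeq (σ : List Bool) (S : Finset (ℤ × ℤ)) : Finset (ℤ × ℤ) :=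
  σ.foldl (fun T b => if b then DE T else DN T) S

/-- The (p,q)-rectangle around an integer point. -/
noncomputable def Rec2 (u : ℤ × ℤ) (p q : ℕ) : Finset (ℤ × ℤ) :=
  Finset.Icc u.1 (u.1 + (p : ℤ) - 1) ×ˢ Finset.Icc u.2 (u.2 + (q : ℤ) - 1)

/-- The reconfiguration function `F_{l,k}`. -/
noncomputable def F (l k : ℕ) (S : Finset (ℤ × ℤ)) : Finset (ℤ × ℤ) :=
  S.biUnion fun p =>
    Rec2 (p.1 + ((2 : ℤ) ^ l - 1) * (p.1 - xmin S),
          p.2 + ((2 : ℤ) ^ k - 1) * (p.2 - ymin S)) (2 ^ l) (2 ^ k)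

/-- Two grid points are adjacent if they are at orthogonal distance 1. -/
def Adj (u v : ℤ × ℤ) : Prop := (u.1 - v.1).natAbs + (u.2 - v.2).natAbs = 1

/-- A shape is connected if any two of its points are joined by a path of
adjacent points inside the shape. -/
def ShapeConnected (S : Finset (ℤ × ℤ)) : Prop :=
  ∀ u ∈ S, ∀ v ∈ S,
    Relation.ReflTransGen (fun a b => a ∈ S ∧ b ∈ S ∧ Adj a b) u v

/-- `wD D x` is the number of elements of `D` strictly west of `x`. -/
def wD (D : Finset ℤ) (x : ℤ) : ℕ := (D.filter (· < x)).card

/-- East RC doubling of `S` with doubled column set `D`. -/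
def RCE (S : Finset (ℤ × ℤ)) (D : Finset ℤ) : Finset (ℤ × ℤ) :=
  S.image (fun p => (p.1 + (wD D p.1 : ℤ), p.2)) ∪
    (S.filter fun p => p.1 ∈ D).image fun p => (p.1 + (wD D p.1 : ℤ) + 1, p.2)

/-- North RC doubling of `S` with doubled row set `D`. -/
def RCN (S : Finset (ℤ × ℤ)) (D : Finset ℤ) : Finset (ℤ × ℤ) :=
  S.image (fun p => (p.1, p.2 + (wD D p.2 : ℤ))) ∪
    (S.filter fun p => p.2 ∈ D).image fun p => (p.1, p.2 + (wD D p.2 : ℤ) + 1)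

/-- `D` is an admissible doubled column set for `S`. -/
def eastAdmissible (S : Finset (ℤ × ℤ)) (D : Finset ℤ) : Prop :=
  D.Nonempty ∧ ∀ d ∈ D, ∃ y, (d, y) ∈ S

/-- `D` is an admissible doubled row set for `S`. -/
def northAdmissible (S : Finset (ℤ × ℤ)) (D : Finset ℤ) : Prop :=
  D.Nonempty ∧ ∀ d ∈ D, ∃ x, (x, d) ∈ S

/-- One east or north RC doubling step. -/
def RCStep (S T : Finset (ℤ × ℤ)) : Prop :=
  ∃ D : Finset ℤ,
    (eastAdmissible S D ∧ T = RCE S D) ∨ (northAdmissible S D ∧ T = RCN S D)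

/-- One single column or single row doubling step (an RC step with `|D| = 1`). -/
def SingleStep (S T : Finset (ℤ × ℤ)) : Prop :=
  ∃ D : Finset ℤ, D.card = 1 ∧
    ((eastAdmissible S D ∧ T = RCE S D) ∨ (northAdmissible S D ∧ T = RCN S D))

/-- Translate a shape by a vector. -/
def translateSh (v : ℤ × ℤ) (S : Finset (ℤ × ℤ)) : Finset (ℤ × ℤ) :=
  S.image fun p => (p.1 + v.1, p.2 + v.2)

/-- Single east column doubling at column `d`. -/
def oE (d : ℤ) (T : Finset (ℤ × ℤ)) : Finset (ℤ × ℤ) :=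
  (T.filter fun p => p.1 ≤ d) ∪ (T.filter fun p => d ≤ p.1).image fun p => (p.1 + 1, p.2)

/-- The column of `S` at `x`. -/
def colS (S : Finset (ℤ × ℤ)) (x : ℤ) : Finset ℤ := (S.filter fun p => p.1 = x).image Prod.snd

/-- The row of `S` at `y`. -/
def rowS (S : Finset (ℤ × ℤ)) (y : ℤ) : Finset ℤ := (S.filter fun p => p.2 = y).image Prod.fst

/-- `phiC S x` counts the column changes of `S` in the interval `(xmin S, x]`. -/
noncomputable def phiC (S : Finset (ℤ × ℤ)) (x : ℤ) : ℕ :=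
  ((Finset.Icc (xmin S + 1) x).filter fun x' => colS S x' ≠ colS S (x' - 1)).card

/-- `phiR S y` counts the row changes of `S` in the interval `(ymin S, y]`. -/
noncomputable def phiR (S : Finset (ℤ × ℤ)) (y : ℤ) : ℕ :=
  ((Finset.Icc (ymin S + 1) y).filter fun y' => rowS S y' ≠ rowS S (y' - 1)).card

/-- Column compression of a shape. -/
noncomputable def KC (S : Finset (ℤ × ℤ)) : Finset (ℤ × ℤ) := S.image fun p => ((phiC S p.1 : ℤ), p.2)

/-- Row compression of a shape. -/
noncomputable def KR (S : Finset (ℤ × ℤ)) : Finset (ℤ × ℤ) := S.image fun p => (p.1, (phiR S p.2 : ℤ))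

/-- The baseline shape of `S`. -/
noncomputable def Baseline (S : Finset (ℤ × ℤ)) : Finset (ℤ × ℤ) := KR (KC S)

/-- Number of distinct consecutive columns of `S`. -/
noncomputable def mC (S : Finset (ℤ × ℤ)) : ℕ := (S.image Prod.fst).sup (phiC S) + 1

/-- Number of distinct consecutive rows of `S`. -/
noncomputable def mR (S : Finset (ℤ × ℤ)) : ℕ := (S.image Prod.snd).sup (phiR S) + 1

/-- Consecutive multiplicity of the `i`-th distinct column of `S`. -/
noncomputable def MC (S : Finset (ℤ × ℤ)) (i : ℕ) : ℕ := ((S.image Prod.fst).filter fun x => phiC S x = i).card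

/-- Consecutive multiplicity of the `i`-th distinct row of `S`. -/
noncomputable def MR (S : Finset (ℤ × ℤ)) (i : ℕ) : ℕ := ((S.image Prod.snd).filter fun y => phiR S y = i).card

/-- The four unit directions. -/
def dirs : Finset (ℤ × ℤ) := {(1, 0), (-1, 0), (0, 1), (0, -1)}

/-- One node-addition growth step: a direction `d` is fixed and every new node is
generated at a position `p + d` for an existing node `p`. -/
def AddStep (S T : Finset (ℤ × ℤ)) : Prop :=
  ∃ d ∈ dirs, S ⊆ T ∧ T ⊆ S ∪ S.image (fun p => (p.1 + d.1, p.2 + d.2))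

/-!
If `D = insert d D'` with `d` larger than every element of `D'`, then doubling the columns of
`D'` shifts column `d` east by `#D'`, and doubling the single column `d + #D'` afterwards yields
the doubling with set `D`. Induction on `D` from its maximum therefore serializes every RC
doubling; the converse is trivial. Both statements reduce to a one-dimensional fact about how a
doubling redistributes column (or row) indices, which is the same for east and north doublings.
-/

/-- The RC doubling with set `D` sends column `x` onto the columns `z` of the interval
`[x + wD D x, x + 1 + wD D (x + 1))`; written this way, composing doublings is linear arithmetic. -/
def RCCol (D : Finset ℤ) (x z : ℤ) : Prop :=
  x + wD D x ≤ z ∧ z < x + 1 + wD D (x + 1)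

lemma wD_add_one (D : Finset ℤ) (x : ℤ) :
    wD D (x + 1) = wD D x + if x ∈ D then 1 else 0 := by
  have hfilter : D.filter (· < x + 1) =
      if x ∈ D then insert x (D.filter (· < x)) else D.filter (· < x) := by
    split_ifs with h <;> ext e <;> simp only [Finset.mem_filter, Finset.mem_insert] <;> grind
  rw [wD, wD, hfilter]
  split_ifs <;> simp [Finset.card_insert_of_notMem]

lemma wD_singleton (d x : ℤ) : wD {d} x = if d < x then 1 else 0 := by
  by_cases h : d < x <;> simp [wD, Finset.filter_singleton, h]

lemma wD_insert_of_le {D : Finset ℤ} {d x : ℤ} (h : x ≤ d) : wD (insert d D) x = wD D x := by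
  simp [wD, Finset.filter_insert, not_lt.2 h]

lemma wD_eq_card {D : Finset ℤ} {x : ℤ} (h : ∀ e ∈ D, e < x) : wD D x = D.card := by
  rw [wD, Finset.filter_true_of_mem h]

lemma wD_le_card (D : Finset ℤ) (x : ℤ) : wD D x ≤ D.card := Finset.card_filter_le _ _

lemma RCCol_iff {D : Finset ℤ} {x z : ℤ} :
    RCCol D x z ↔ z = x + wD D x ∨ (x ∈ D ∧ z = x + wD D x + 1) := by
  rw [RCCol, wD_add_one]
  split_ifs with h <;> simp only [h, true_and, false_and, or_false] <;> push_cast <;> omega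

lemma RCCol_insert_max {D : Finset ℤ} {d : ℤ} (hD : ∀ e ∈ D, e < d) (x z : ℤ) :
    RCCol (insert d D) x z ↔ ∃ m, RCCol D x m ∧ RCCol {d + D.card} m z := by
  have hright : ∀ y, d < y → wD (insert d D) y = D.card + 1 ∧ wD D y = D.card := by
    intro y hy
    have hdD : d ∉ D := fun h => lt_irrefl d (hD d h)
    rw [wD_eq_card (by grind), wD_eq_card (fun e he => (hD e he).trans hy),
      Finset.card_insert_of_notMem hdD]
    exact ⟨rfl, rfl⟩
  simp only [RCCol, wD_singleton]
  rcases lt_trichotomy x d with hx | rfl | hx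
  · rw [wD_insert_of_le hx.le, wD_insert_of_le (show x + 1 ≤ d by omega)]
    have := wD_le_card D (x + 1)
    constructor
    · exact fun h => ⟨z, h, by split_ifs <;> omega⟩
    · rintro ⟨m, hm, hz⟩
      split_ifs at hz <;> omega
  · obtain ⟨h₁, h₂⟩ := hright (x + 1) (lt_add_one x)
    rw [wD_insert_of_le le_rfl, h₁, h₂, wD_eq_card hD]
    constructor
    · exact fun h => ⟨x + D.card, by omega, by split_ifs <;> omega⟩
    · rintro ⟨m, hm, hz⟩
      split_ifs at hz <;> omega
  · obtain ⟨h₁, h₂⟩ := hright x hx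
    obtain ⟨h₃, h₄⟩ := hright (x + 1) (by omega)
    rw [h₁, h₂, h₃, h₄]
    constructor
    · exact fun h => ⟨z - 1, by omega, by split_ifs <;> omega⟩
    · rintro ⟨m, hm, hz⟩
      split_ifs at hz <;> omega

lemma mem_RCE {S : Finset (ℤ × ℤ)} {D : Finset ℤ} {q : ℤ × ℤ} :
    q ∈ RCE S D ↔ ∃ x, (x, q.2) ∈ S ∧ RCCol D x q.1 := by
  obtain ⟨a, b⟩ := q
  simp only [RCE, RCCol_iff, Finset.mem_union, Finset.mem_image, Finset.mem_filter, Prod.exists,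
    Prod.mk.injEq]
  grind

lemma mem_RCN {S : Finset (ℤ × ℤ)} {D : Finset ℤ} {q : ℤ × ℤ} :
    q ∈ RCN S D ↔ ∃ y, (q.1, y) ∈ S ∧ RCCol D y q.2 := by
  obtain ⟨a, b⟩ := q
  simp only [RCN, RCCol_iff, Finset.mem_union, Finset.mem_image, Finset.mem_filter, Prod.exists,
    Prod.mk.injEq]
  grind

lemma RCE_insert_max {D : Finset ℤ} {d : ℤ} (hD : ∀ e ∈ D, e < d) (S : Finset (ℤ × ℤ)) :
    RCE S (insert d D) = RCE (RCE S D) {d + D.card} := by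
  ext ⟨a, b⟩
  simp only [mem_RCE, RCCol_insert_max hD]
  grind

lemma RCN_insert_max {D : Finset ℤ} {d : ℤ} (hD : ∀ e ∈ D, e < d) (S : Finset (ℤ × ℤ)) :
    RCN S (insert d D) = RCN (RCN S D) {d + D.card} := by
  ext ⟨a, b⟩
  simp only [mem_RCN, RCCol_insert_max hD]
  grind

lemma RCE_empty (S : Finset (ℤ × ℤ)) : RCE S ∅ = S := by
  simp [RCE, wD]

lemma RCN_empty (S : Finset (ℤ × ℤ)) : RCN S ∅ = S := by
  simp [RCN, wD]

lemma RCCol_of_forall_lt {D : Finset ℤ} {d : ℤ} (hD : ∀ e ∈ D, e < d) :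
    RCCol D d (d + D.card) := by
  rw [RCCol, wD_eq_card hD, wD_eq_card fun e he => (hD e he).trans (lt_add_one d)]
  omega

lemma reflTransGen_of_insert_max {α : Type*} {R : α → α → Prop} {P : ℤ → Prop}
    (f : Finset ℤ → α) (step : ∀ d D, (∀ e ∈ D, e < d) → P d → R (f D) (f (insert d D)))
    (D : Finset ℤ) (hD : ∀ d ∈ D, P d) : Relation.ReflTransGen R (f ∅) (f D) := by
  induction D using Finset.induction_on_max with
  | empty => exact .refl
  | insert d D hlt ih =>
    exact (ih fun e he => hD e (Finset.mem_insert_of_mem he)).tail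
      (step d D hlt (hD d (Finset.mem_insert_self d D)))

lemma singleStep_RCE_insert_max {S : Finset (ℤ × ℤ)} {D : Finset ℤ} {d : ℤ}
    (hD : ∀ e ∈ D, e < d) (hd : ∃ y, (d, y) ∈ S) :
    SingleStep (RCE S D) (RCE S (insert d D)) := by
  obtain ⟨y, hy⟩ := hd
  refine ⟨{d + D.card}, Finset.card_singleton _,
    Or.inl ⟨⟨Finset.singleton_nonempty _, ?_⟩, RCE_insert_max hD S⟩⟩
  simp only [Finset.mem_singleton, forall_eq]
  exact ⟨y, mem_RCE.2 ⟨d, hy, RCCol_of_forall_lt hD⟩⟩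

lemma singleStep_RCN_insert_max {S : Finset (ℤ × ℤ)} {D : Finset ℤ} {d : ℤ}
    (hD : ∀ e ∈ D, e < d) (hd : ∃ x, (x, d) ∈ S) :
    SingleStep (RCN S D) (RCN S (insert d D)) := by
  obtain ⟨x, hx⟩ := hd
  refine ⟨{d + D.card}, Finset.card_singleton _,
    Or.inr ⟨⟨Finset.singleton_nonempty _, ?_⟩, RCN_insert_max hD S⟩⟩
  simp only [Finset.mem_singleton, forall_eq]
  exact ⟨x, mem_RCN.2 ⟨d, hx, RCCol_of_forall_lt hD⟩⟩

lemma reflTransGen_singleStep_RCE {S : Finset (ℤ × ℤ)} {D : Finset ℤ}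
    (hD : ∀ d ∈ D, ∃ y, (d, y) ∈ S) : Relation.ReflTransGen SingleStep S (RCE S D) := by
  simpa only [RCE_empty] using
    reflTransGen_of_insert_max (RCE S) (fun _ _ => singleStep_RCE_insert_max) D hD

lemma reflTransGen_singleStep_RCN {S : Finset (ℤ × ℤ)} {D : Finset ℤ}
    (hD : ∀ d ∈ D, ∃ x, (x, d) ∈ S) : Relation.ReflTransGen SingleStep S (RCN S D) := by
  simpa only [RCN_empty] using
    reflTransGen_of_insert_max (RCN S) (fun _ _ => singleStep_RCN_insert_max) D hD

lemma reflTransGen_singleStep_of_rcStep {S T : Finset (ℤ × ℤ)} (h : RCStep S T) :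
    Relation.ReflTransGen SingleStep S T := by
  obtain ⟨D, ⟨⟨-, hD⟩, rfl⟩ | ⟨⟨-, hD⟩, rfl⟩⟩ := h
  · exact reflTransGen_singleStep_RCE hD
  · exact reflTransGen_singleStep_RCN hD

lemma rcStep_of_singleStep {S T : Finset (ℤ × ℤ)} (h : SingleStep S T) : RCStep S T :=
  let ⟨D, _, hD⟩ := h
  ⟨D, hD⟩

lemma reflTransGen_rcStep_eq : Relation.ReflTransGen RCStep = Relation.ReflTransGen SingleStep :=
  le_antisymm (Relation.reflTransGen_closed fun _ _ => reflTransGen_singleStep_of_rcStep)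
    (Relation.ReflTransGen.mono fun _ _ => rcStep_of_singleStep)

theorem RC_serializable_general (S_I S_F : Finset (ℤ × ℤ)) :
    (∃ v : ℤ × ℤ, Relation.ReflTransGen RCStep S_I (translateSh v S_F)) ↔
      (∃ v : ℤ × ℤ, Relation.ReflTransGen SingleStep S_I (translateSh v S_F)) := by
  rw [reflTransGen_rcStep_eq]

/-- serializability of parallel doubling: `S_F` is reachable (up to
translation) from `S_I` via RC doubling operations iff it is reachable via single
column/row doubling operations. -/
theorem RC_serializable (S_I S_F : Finset (ℤ × ℤ))
    (hI : S_I.Nonempty) (hF : S_F.Nonempty) :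
    (∃ v : ℤ × ℤ, Relation.ReflTransGen RCStep S_I (translateSh v S_F)) ↔
      (∃ v : ℤ × ℤ, Relation.ReflTransGen SingleStep S_I (translateSh v S_F)) :=
  RC_serializable_general S_I S_F
end

section
/- Every connected shape is reachable from its baseline: for every connected shape S there is a finite sequence of east and north RC doubling operations transforming the baseline B(S) into a translate of S. -/
/-!
Column compression only merges runs of equal adjacent columns. If columns `x - 1` and `x` of `S`
coincide, deleting column `x` gives a smaller shape with the same column compression, and doubling
its column `x - 1` gives `S` back. Induction on `|S|` therefore shows that `K_C(S)` reaches `S` by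
single east doublings; in the base case no two adjacent columns coincide, and `K_C` is a
translation because the occupied columns form an interval. Transposing gives the same for rows,
and `K_C` keeps the set of occupied rows, so `B(S) = K_R(K_C(S))` reaches a translate of `K_C(S)`,
which reaches a translate of `S` since RC steps commute with translations.
-/

section Minimum

variable {S : Finset (ℤ × ℤ)}

lemma xmin_eq_min' (hS : S.Nonempty) : xmin S = (S.image Prod.fst).min' (hS.image _) := by
  rw [xmin, ← Finset.coe_min', WithTop.untopD_coe]

lemma xmin_le {p : ℤ × ℤ} (hp : p ∈ S) : xmin S ≤ p.1 := by
  rw [xmin_eq_min' ⟨p, hp⟩]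
  exact Finset.min'_le _ _ (Finset.mem_image_of_mem _ hp)

lemma exists_xmin_mem (hS : S.Nonempty) : ∃ y, (xmin S, y) ∈ S := by
  obtain ⟨p, hp, hpx⟩ := Finset.mem_image.mp ((S.image Prod.fst).min'_mem (hS.image _))
  exact ⟨p.2, by rwa [xmin_eq_min' hS, ← hpx]⟩

lemma xmin_eq_of_mem {a y : ℤ} (ha : (a, y) ∈ S) (hle : ∀ p ∈ S, a ≤ p.1) :
    xmin S = a := by
  obtain ⟨y₀, hy₀⟩ := exists_xmin_mem ⟨_, ha⟩
  exact le_antisymm (xmin_le ha) (hle _ hy₀)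

end Minimum

@[simp] lemma mem_colS {S : Finset (ℤ × ℤ)} {x y : ℤ} : y ∈ colS S x ↔ (x, y) ∈ S := by
  simp [colS]

lemma ShapeConnected.ordConnected_image {S : Finset (ℤ × ℤ)} (hS : ShapeConnected S)
    (f : ℤ × ℤ → ℤ) (hf : ∀ p q, Adj p q → f q ≤ f p + 1) :
    (f '' (S : Set (ℤ × ℤ))).OrdConnected := by
  refine ⟨?_⟩
  rintro _ ⟨p, hp, rfl⟩ _ ⟨q, hq, rfl⟩ t ⟨hpt, htq⟩
  induction hS p hp q hq with
  | refl => exact ⟨p, hp, le_antisymm hpt htq⟩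
  | @tail m c _ hmc ih =>
    obtain ⟨hm, hc, hadj⟩ := hmc
    by_cases htm : t ≤ f m
    · exact ih hm htm
    · exact ⟨c, hc, le_antisymm (by linarith [hf m c hadj]) htq⟩

section ColumnChanges

variable {S : Finset (ℤ × ℤ)}

lemma phiC_of_le_xmin {t : ℤ} (ht : t ≤ xmin S) : phiC S t = 0 := by
  rw [phiC, Finset.Icc_eq_empty (by omega), Finset.filter_empty, Finset.card_empty]

lemma phiC_add_one {t : ℤ} (ht : xmin S ≤ t) :
    phiC S (t + 1) = phiC S t + if colS S (t + 1) = colS S t then 0 else 1 := by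
  rw [phiC, ← Finset.insert_Icc_right_eq_Icc_add_one (by omega), Finset.filter_insert,
    add_sub_cancel_right]
  by_cases h : colS S (t + 1) = colS S t
  · simp [h, phiC]
  · rw [if_pos h, if_neg h, Finset.card_insert_of_notMem (by simp), phiC]

end ColumnChanges

lemma KC_eq_translateSh {S : Finset (ℤ × ℤ)}
    (hcols : (Prod.fst '' (S : Set (ℤ × ℤ))).OrdConnected)
    (hchange : ∀ x, (colS S x).Nonempty → colS S x ≠ colS S (x - 1)) :
    KC S = translateSh (-xmin S, 0) S := by
  refine Finset.image_congr fun p hp => ?_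
  obtain ⟨y₀, hy₀⟩ := exists_xmin_mem ⟨p, hp⟩
  have hchanges : ∀ t ∈ Finset.Icc (xmin S + 1) p.1, colS S t ≠ colS S (t - 1) := by
    intro t ht
    rw [Finset.mem_Icc] at ht
    obtain ⟨q, hq, rfl⟩ := hcols.out ⟨_, hy₀, rfl⟩ ⟨p, hp, rfl⟩ ⟨by omega, ht.2⟩
    exact hchange _ ⟨q.2, mem_colS.mpr hq⟩
  have hphi : (phiC S p.1 : ℤ) = p.1 - xmin S := by
    rw [phiC, Finset.filter_true_of_mem hchanges, Int.card_Icc,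
      Int.toNat_of_nonneg (by linarith [xmin_le hp])]
    ring
  simp only [hphi, Prod.mk.injEq]
  constructor <;> ring

@[simp] lemma mem_translateSh {v p : ℤ × ℤ} {S : Finset (ℤ × ℤ)} :
    p ∈ translateSh v S ↔ (p.1 - v.1, p.2 - v.2) ∈ S := by
  simp only [translateSh, Finset.mem_image]
  constructor
  · rintro ⟨q, hq, rfl⟩
    simpa using hq
  · exact fun h => ⟨_, h, by simp⟩

lemma translateSh_translateSh (v w : ℤ × ℤ) (S : Finset (ℤ × ℤ)) :
    translateSh v (translateSh w S) = translateSh (w + v) S := by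
  ext p
  simp only [mem_translateSh, Prod.fst_add, Prod.snd_add, sub_add_eq_sub_sub, sub_right_comm _ v.1,
    sub_right_comm _ v.2]

def swapSh (S : Finset (ℤ × ℤ)) : Finset (ℤ × ℤ) := S.image Prod.swap

section Transpose

variable {S : Finset (ℤ × ℤ)}

@[simp] lemma mem_swapSh {p : ℤ × ℤ} : p ∈ swapSh S ↔ p.swap ∈ S := by
  rw [swapSh, Finset.mem_image]
  exact ⟨fun ⟨q, hq, hqp⟩ => hqp ▸ by simpa using hq,
    fun h => ⟨p.swap, h, p.swap_swap⟩⟩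

@[simp] lemma swapSh_swapSh : swapSh (swapSh S) = S := by
  ext p
  simp

lemma swapSh_translateSh (v : ℤ × ℤ) :
    swapSh (translateSh v S) = translateSh v.swap (swapSh S) := by
  ext p
  simp

lemma image_fst_swapSh :
    Prod.fst '' (swapSh S : Set (ℤ × ℤ)) = Prod.snd '' (S : Set (ℤ × ℤ)) := by
  simp [swapSh, Set.image_image]

lemma xmin_swapSh : xmin (swapSh S) = ymin S := by
  rw [xmin, ymin, swapSh, Finset.image_image]
  rfl

lemma colS_swapSh (x : ℤ) : colS (swapSh S) x = rowS S x := by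
  ext y
  simp [rowS]

lemma KC_swapSh : KC (swapSh S) = swapSh (KR S) := by
  have hphi : phiC (swapSh S) = phiR S := by
    ext x
    simp only [phiC, phiR, xmin_swapSh, colS_swapSh]
  rw [KC, KR, hphi, swapSh, swapSh, Finset.image_image, Finset.image_image]
  rfl

lemma RCE_swapSh (D : Finset ℤ) : RCE (swapSh S) D = swapSh (RCN S D) := by
  rw [RCE, RCN, swapSh, swapSh, Finset.filter_image, Finset.image_union, Finset.image_image,
    Finset.image_image, Finset.image_image, Finset.image_image]
  rfl

lemma eastAdmissible_swapSh (D : Finset ℤ) :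
    eastAdmissible (swapSh S) D ↔ northAdmissible S D := by
  simp [eastAdmissible, northAdmissible]

end Transpose

lemma RCStep.swap {S T : Finset (ℤ × ℤ)} (h : RCStep S T) : RCStep (swapSh S) (swapSh T) := by
  obtain ⟨D, ⟨hD, rfl⟩ | ⟨hD, rfl⟩⟩ := h
  · refine ⟨D, Or.inr ⟨?_, ?_⟩⟩
    · rwa [← eastAdmissible_swapSh, swapSh_swapSh]
    · have h := RCE_swapSh (S := swapSh S) D
      rw [swapSh_swapSh] at h
      rw [h, swapSh_swapSh]
  · exact ⟨D, Or.inl ⟨(eastAdmissible_swapSh D).mpr hD, (RCE_swapSh D).symm⟩⟩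

lemma wD_image_add (D : Finset ℤ) (c x : ℤ) : wD (D.image (· + c)) (x + c) = wD D x := by
  rw [wD, wD, Finset.filter_image, Finset.card_image_of_injective _ (add_left_injective c)]
  simp

lemma RCE_translateSh (S : Finset (ℤ × ℤ)) (D : Finset ℤ) (v : ℤ × ℤ) :
    RCE (translateSh v S) (D.image (· + v.1)) = translateSh v (RCE S D) := by
  simp only [RCE, translateSh, Finset.filter_image, Finset.image_union, Finset.image_image,
    Function.comp_def, wD_image_add, Finset.mem_image, add_left_inj, exists_eq_right]
  congr 1 <;> refine Finset.image_congr fun p _ => ?_ <;>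
    simp only [Prod.mk.injEq, and_true] <;> ring

lemma RCN_translateSh (S : Finset (ℤ × ℤ)) (D : Finset ℤ) (v : ℤ × ℤ) :
    RCN (translateSh v S) (D.image (· + v.2)) = translateSh v (RCN S D) := by
  have h := congrArg swapSh (RCE_translateSh (swapSh S) D v.swap)
  rwa [← swapSh_translateSh, RCE_swapSh, RCE_swapSh, swapSh_swapSh, swapSh_translateSh,
    Prod.swap_swap, swapSh_swapSh, Prod.fst_swap] at h

lemma RCStep.translate {S T : Finset (ℤ × ℤ)} (v : ℤ × ℤ) (h : RCStep S T) :
    RCStep (translateSh v S) (translateSh v T) := by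
  obtain ⟨D, ⟨⟨hne, hcol⟩, rfl⟩ | ⟨⟨hne, hrow⟩, rfl⟩⟩ := h
  · refine ⟨D.image (· + v.1),
      Or.inl ⟨⟨hne.image _, ?_⟩, (RCE_translateSh S D v).symm⟩⟩
    simp only [Finset.mem_image, mem_translateSh]
    rintro _ ⟨d, hd, rfl⟩
    obtain ⟨y, hy⟩ := hcol d hd
    exact ⟨y + v.2, by simpa using hy⟩
  · refine ⟨D.image (· + v.2),
      Or.inr ⟨⟨hne.image _, ?_⟩, (RCN_translateSh S D v).symm⟩⟩
    simp only [Finset.mem_image, mem_translateSh]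
    rintro _ ⟨d, hd, rfl⟩
    obtain ⟨x, hx⟩ := hrow d hd
    exact ⟨x + v.1, by simpa using hx⟩

lemma mem_RCE_singleton {T : Finset (ℤ × ℤ)} {d s y : ℤ} :
    (s, y) ∈ RCE T {d} ↔ (if s ≤ d then s else s - 1, y) ∈ T := by
  simp only [RCE, wD, Finset.filter_singleton, apply_ite Finset.card, Finset.card_singleton,
    Finset.card_empty, Finset.mem_union, Finset.mem_image, Finset.mem_filter,
    Finset.mem_singleton, Prod.mk.injEq, Prod.exists]
  constructor
  · rintro (⟨a, b, hab, hs, rfl⟩ | ⟨a, b, ⟨hab, rfl⟩, hs, rfl⟩) <;>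
      convert hab using 2 <;> split_ifs at hs ⊢ <;> omega
  · intro h
    split_ifs at h with hsd
    · exact Or.inl ⟨s, y, h, by rw [if_neg (by omega)]; simp, rfl⟩
    · by_cases hsd' : s = d + 1
      · refine Or.inr ⟨d, y, ⟨?_, rfl⟩, by simp [hsd'], rfl⟩
        rwa [hsd', add_sub_cancel_right] at h
      · exact Or.inl ⟨s - 1, y, h, by rw [if_pos (by omega)]; simp, rfl⟩

def contractColumn (x : ℤ) (S : Finset (ℤ × ℤ)) : Finset (ℤ × ℤ) :=
  S.image fun p => (if p.1 < x then p.1 else p.1 - 1, p.2)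

section Contraction

variable {S : Finset (ℤ × ℤ)} {x : ℤ} (hdup : ∀ y, (x - 1, y) ∈ S ↔ (x, y) ∈ S)
include hdup

lemma mem_contractColumn {s y : ℤ} :
    (s, y) ∈ contractColumn x S ↔ (if s < x then s else s + 1, y) ∈ S := by
  simp only [contractColumn, Finset.mem_image, Prod.mk.injEq, Prod.exists]
  constructor
  · rintro ⟨a, b, hab, hs, rfl⟩
    split_ifs at hs ⊢ with hsx hax hax
    · rwa [← hs]
    · obtain ⟨rfl, rfl⟩ : a = x ∧ s = x - 1 := by omega
      exact (hdup b).mpr hab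
    · omega
    · rwa [← hs, sub_add_cancel]
  · intro h
    split_ifs at h with hsx
    · exact ⟨s, y, h, if_pos hsx, rfl⟩
    · exact ⟨s + 1, y, h, by rw [if_neg (by omega), add_sub_cancel_right], rfl⟩

lemma colS_contractColumn (s : ℤ) :
    colS (contractColumn x S) s = colS S (if s < x then s else s + 1) := by
  ext y
  rw [mem_colS, mem_colS, mem_contractColumn hdup]

lemma image_fst_contractColumn :
    Prod.fst '' (contractColumn x S : Set (ℤ × ℤ)) =
      (fun s => if s < x then s else s + 1) ⁻¹' (Prod.fst '' (S : Set (ℤ × ℤ))) := by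
  ext s
  simp only [Set.mem_image, Set.mem_preimage, Finset.mem_coe, Prod.exists, exists_and_right,
    exists_eq_right, mem_contractColumn hdup]

lemma ordConnected_image_fst_contractColumn
    (hcols : (Prod.fst '' (S : Set (ℤ × ℤ))).OrdConnected) :
    (Prod.fst '' (contractColumn x S : Set (ℤ × ℤ))).OrdConnected := by
  have hmono : Monotone fun s : ℤ => if s < x then s else s + 1 := fun s t hst => by
    dsimp only
    split_ifs <;> omega
  rw [image_fst_contractColumn hdup]
  exact hcols.preimage_mono hmono

lemma RCE_contractColumn : RCE (contractColumn x S) {x - 1} = S := by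
  ext ⟨s, y⟩
  rw [mem_RCE_singleton, mem_contractColumn hdup]
  split_ifs with h₁ h₂ h₂
  · rfl
  · omega
  · obtain rfl : s = x := by omega
    exact hdup y
  · rw [sub_add_cancel]

variable {y₀ : ℤ} (hy₀ : (x, y₀) ∈ S)
include hy₀

lemma card_contractColumn_lt : (contractColumn x S).card < S.card := by
  refine Finset.card_image_le.lt_of_ne fun hcard => ?_
  have h := (Finset.card_image_iff.mp hcard) ((hdup y₀).mpr hy₀) hy₀
  simp at h

lemma xmin_contractColumn : xmin (contractColumn x S) = xmin S := by
  have hxmin : xmin S < x := by linarith [xmin_le ((hdup y₀).mpr hy₀)]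
  obtain ⟨y₁, hy₁⟩ := exists_xmin_mem ⟨_, hy₀⟩
  refine xmin_eq_of_mem (y := y₁) ?_ fun ⟨s, y⟩ hp => ?_
  · rwa [mem_contractColumn hdup, if_pos hxmin]
  · have := xmin_le ((mem_contractColumn hdup).mp hp)
    split_ifs at this <;> simp only at this ⊢ <;> omega

lemma phiC_contractColumn (t : ℤ) :
    phiC (contractColumn x S) (if t < x then t else t - 1) = phiC S t := by
  have hxmin : xmin S < x := by linarith [xmin_le ((hdup y₀).mpr hy₀)]
  have hxmin' := xmin_contractColumn hdup hy₀
  have hcol : colS S (x - 1) = colS S x := by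
    ext y
    rw [mem_colS, mem_colS, hdup]
  have hcolc := colS_contractColumn hdup
  rcases lt_or_ge t (xmin S) with ht | ht
  · rw [if_pos (by omega), phiC_of_le_xmin ht.le, phiC_of_le_xmin (by omega)]
  induction t, ht using Int.leInduction with
  | base => rw [if_pos hxmin, phiC_of_le_xmin le_rfl, phiC_of_le_xmin hxmin'.ge]
  | succ t ht ih =>
    rw [phiC_add_one ht]
    rcases lt_trichotomy (t + 1) x with hlt | rfl | hgt
    · rw [if_pos (show t < x by omega)] at ih
      rw [if_pos hlt, phiC_add_one (S := contractColumn x S) (by omega), ih, hcolc, hcolc,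
        if_pos hlt, if_pos (show t < x by omega)]
    · rw [if_pos (lt_add_one t)] at ih
      rw [if_neg (lt_irrefl _), add_sub_cancel_right, ih, ← hcol, add_sub_cancel_right,
        if_pos rfl, add_zero]
    · rw [if_neg (show ¬t < x by omega)] at ih
      have hprev : t = t - 1 + 1 := by ring
      rw [if_neg (show ¬t + 1 < x by omega), add_sub_cancel_right, hprev,
        phiC_add_one (S := contractColumn x S) (by omega), ← hprev, ih, hcolc, hcolc,
        if_neg (show ¬t < x by omega)]
      have hcol' : colS S (if t - 1 < x then t - 1 else t - 1 + 1) = colS S t := by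
        split_ifs with h
        · obtain rfl : t = x := by omega
          exact hcol
        · rw [sub_add_cancel]
      rw [hcol']

lemma KC_contractColumn : KC (contractColumn x S) = KC S := by
  have hphi := phiC_contractColumn hdup hy₀
  simp only [KC, contractColumn, Finset.image_image] at hphi ⊢
  exact Finset.image_congr fun p _ => by simp [hphi]

lemma rcStep_contractColumn : RCStep (contractColumn x S) S := by
  refine ⟨{x - 1}, Or.inl ⟨⟨Finset.singleton_nonempty _, fun d hd => ⟨y₀, ?_⟩⟩,
    (RCE_contractColumn hdup).symm⟩⟩
  rw [Finset.mem_singleton.mp hd, mem_contractColumn hdup, if_pos (sub_one_lt x)]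
  exact (hdup y₀).mpr hy₀

end Contraction

theorem exists_reflTransGen_KC_translateSh (S : Finset (ℤ × ℤ))
    (hcols : (Prod.fst '' (S : Set (ℤ × ℤ))).OrdConnected) :
    ∃ v, Relation.ReflTransGen RCStep (KC S) (translateSh v S) := by
  induction hcard : S.card using Nat.strong_induction_on generalizing S with
  | _ n ih =>
    by_cases hrep : ∃ x, (colS S x).Nonempty ∧ colS S x = colS S (x - 1)
    · obtain ⟨x, ⟨y₀, hy₀⟩, hcol⟩ := hrep
      have hdup : ∀ y, (x - 1, y) ∈ S ↔ (x, y) ∈ S := fun y => by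
        rw [← mem_colS, ← mem_colS, hcol]
      rw [mem_colS] at hy₀
      obtain ⟨v, hv⟩ := ih _ (hcard ▸ card_contractColumn_lt hdup hy₀) (contractColumn x S)
        (ordConnected_image_fst_contractColumn hdup hcols) rfl
      rw [← KC_contractColumn hdup hy₀]
      exact ⟨v, hv.tail ((rcStep_contractColumn hdup hy₀).translate v)⟩
    · simp only [not_exists, not_and] at hrep
      exact ⟨_, by rw [KC_eq_translateSh hcols hrep]⟩

theorem exists_reflTransGen_KR_translateSh (S : Finset (ℤ × ℤ))
    (hrows : (Prod.snd '' (S : Set (ℤ × ℤ))).OrdConnected) :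
    ∃ v, Relation.ReflTransGen RCStep (KR S) (translateSh v S) := by
  obtain ⟨v, hv⟩ := exists_reflTransGen_KC_translateSh (swapSh S) (image_fst_swapSh ▸ hrows)
  have h := hv.lift swapSh fun _ _ hstep => hstep.swap
  rw [Function.onFun, KC_swapSh, swapSh_swapSh, swapSh_translateSh, swapSh_swapSh] at h
  exact ⟨v.swap, h⟩

lemma image_snd_KC (S : Finset (ℤ × ℤ)) :
    Prod.snd '' (KC S : Set (ℤ × ℤ)) = Prod.snd '' (S : Set (ℤ × ℤ)) := by
  rw [KC, Finset.coe_image, Set.image_image]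

theorem baseline_reaches_shape_general (S : Finset (ℤ × ℤ))
    (hconn : ShapeConnected S) :
    ∃ v : ℤ × ℤ, Relation.ReflTransGen RCStep (Baseline S) (translateSh v S) := by
  have hcols := hconn.ordConnected_image Prod.fst fun p q h => by unfold Adj at h; omega
  have hrows := hconn.ordConnected_image Prod.snd fun p q h => by unfold Adj at h; omega
  obtain ⟨w, hw⟩ := exists_reflTransGen_KC_translateSh S hcols
  obtain ⟨v, hv⟩ := exists_reflTransGen_KR_translateSh (KC S) (image_snd_KC S ▸ hrows)
  refine ⟨w + v, hv.trans ?_⟩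
  rw [← translateSh_translateSh]
  exact hw.lift (translateSh v) fun _ _ hstep => hstep.translate v

/-- every connected shape is reachable from its baseline via RC
doubling operations, up to translation. -/
theorem baseline_reaches_shape (S : Finset (ℤ × ℤ)) (hS : S.Nonempty)
    (hconn : ShapeConnected S) :
    ∃ v : ℤ × ℤ, Relation.ReflTransGen RCStep (Baseline S) (translateSh v S) :=
  baseline_reaches_shape_general S hconn
end
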